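/- Let k be a field of characteristic ≠ 2 and φ ∈ k[x] a monic quadratic polynomial whose iterates are all separable, with adjusted post-critical orbit (cₙ) ⊂ k×. Suppose that for some n ≥ 1 the classes of c₁, …, cₙ in the 𝔽₂-vector space k×/(k×)² are linearly dependent, i.e., some nonempty product ∏_{i∈I} cᵢ (I ⊆ {1,…,n}) is a square in k. Then the arboreal Galois representation ρ_φ : Gal(k^sep/k) → Aut(T_∞(φ)) is not surjective. -/

import Mathlib

open Polynomial

/-- The `n`-th iterate `φ⁽ⁿ⁾` of a polynomial `φ`, as a polynomial. -/
noncomputable def polyIterate {R : Type*} [CommRing R] (φ : Polynomial R) (n : ℕ) :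
    Polynomial R :=
  (fun g => g.comp φ)^[n] X

/-!
Let `K_m ⊆ k̄` be generated by the roots of `φ⁽ᵐ⁾`. A root `α` of `φ⁽ᵐ⁺¹⁾` satisfies
`(α - γ)² = β + c₁` with `β = φ(α)` a root of `φ⁽ᵐ⁾`, so `K_{m+1}` is `K_m` with the square roots
`√(β + c₁)` adjoined, at most `2^m` of them; hence `[K_m : k] ≤ 2^(2^m - 1) = |Aut T_m|`.
The product of the `β + c₁` is `c_{m+1}`, so the product of these square roots is a square root
of `c_{m+1}`. If `∏_{i ∈ I} cᵢ` is a square and `M + 1 = max I`, then `c_{M+1}` is a square in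
`K_M`, because every `cᵢ` with `i ≤ M` is; so one of the square roots adjoined at level `M + 1`
is redundant and `[K_{M+1} : k] ≤ 2^(2^(M+1) - 2)`.
-/

section FieldTheory

open IntermediateField Module

variable {F Ω : Type*} [Field F] [Field Ω] [Algebra F Ω]

theorem finrank_adjoin_simple_le_two_of_sq_mem_range {a : Ω}
    (ha : a ^ 2 ∈ Set.range (algebraMap F Ω)) : finrank F F⟮a⟯ ≤ 2 := by
  obtain ⟨y, hy⟩ := ha
  have hmonic : (X ^ 2 - C y : F[X]).Monic := monic_X_pow_sub_C y two_ne_zero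
  have hroot : aeval a (X ^ 2 - C y : F[X]) = 0 := by simp [hy]
  rw [adjoin.finrank ⟨_, hmonic, hroot⟩]
  calc (minpoly F a).natDegree ≤ (X ^ 2 - C y : F[X]).natDegree :=
        natDegree_le_natDegree (minpoly.degree_le_of_ne_zero F a hmonic.ne_zero hroot)
    _ = 2 := natDegree_X_pow_sub_C

theorem finrank_adjoin_image_le_two_pow_card {ι : Type*} [DecidableEq ι] (s : Finset ι)
    {t : ι → Ω} (ht : ∀ i ∈ s, t i ^ 2 ∈ Set.range (algebraMap F Ω)) :
    finrank F (adjoin F (t '' s)) ≤ 2 ^ s.card := by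
  induction s using Finset.induction with
  | empty =>
    rw [Finset.coe_empty, Set.image_empty, adjoin_empty, IntermediateField.finrank_bot]
    rfl
  | @insert a s ha ih =>
    set E := adjoin F (t '' s)
    have htower : adjoin F (t '' ↑(insert a s)) = E⟮t a⟯.restrictScalars F := by
      rw [adjoin_adjoin_left, Finset.coe_insert, Set.image_insert_eq, Set.union_comm,
        Set.insert_eq]
    have hsq : t a ^ 2 ∈ Set.range (algebraMap E Ω) := by
      obtain ⟨y, hy⟩ := ht a (Finset.mem_insert_self a s)
      exact ⟨algebraMap F E y, by rw [← IsScalarTower.algebraMap_apply, hy]⟩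
    rw [htower, Finset.card_insert_of_notMem ha, pow_succ]
    calc finrank F (E⟮t a⟯.restrictScalars F) = finrank F E * finrank E E⟮t a⟯ :=
          (finrank_mul_finrank F E E⟮t a⟯).symm
      _ ≤ 2 ^ s.card * 2 := Nat.mul_le_mul (ih fun i hi => ht i (Finset.mem_insert_of_mem hi))
          (finrank_adjoin_simple_le_two_of_sq_mem_range hsq)

theorem finrank_adjoin_image_le_two_pow_card_sub_one {ι : Type*} [DecidableEq ι] (s : Finset ι)
    {t : ι → Ω} (ht : ∀ i ∈ s, t i ^ 2 ∈ Set.range (algebraMap F Ω)) (ht0 : ∀ i ∈ s, t i ≠ 0)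
    (hprod : ∏ i ∈ s, t i ∈ Set.range (algebraMap F Ω)) :
    finrank F (adjoin F (t '' s)) ≤ 2 ^ (s.card - 1) := by
  rcases s.eq_empty_or_nonempty with rfl | ⟨a, ha⟩
  · rw [Finset.coe_empty, Set.image_empty, adjoin_empty, IntermediateField.finrank_bot]; rfl
  -- `t a` is the product divided by the other factors, so it is redundant.
  have hmem : t a ∈ adjoin F (t '' ↑(s.erase a)) := by
    obtain ⟨z, hz⟩ := hprod
    have hrest : ∏ i ∈ s.erase a, t i ≠ 0 :=
      Finset.prod_ne_zero_iff.mpr fun i hi => ht0 i (Finset.mem_of_mem_erase hi)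
    have : t a = algebraMap F Ω z / ∏ i ∈ s.erase a, t i := by
      rw [hz, ← Finset.mul_prod_erase s t ha, mul_div_cancel_right₀ _ hrest]
    rw [this]
    exact div_mem (IntermediateField.algebraMap_mem _ z)
      (prod_mem fun i hi => subset_adjoin F _ (Set.mem_image_of_mem t hi))
  have hadj : adjoin F (t '' s) = adjoin F (t '' ↑(s.erase a)) := by
    conv_lhs => rw [← Finset.insert_erase ha, Finset.coe_insert, Set.image_insert_eq,
      ← adjoin_insert_adjoin, Set.insert_eq_of_mem hmem, adjoin_self]
  rw [hadj, ← Finset.card_erase_of_mem ha]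
  exact finrank_adjoin_image_le_two_pow_card _ fun i hi => ht i (Finset.mem_of_mem_erase hi)

theorem mem_range_of_sq_eq_algebraMap {x : Ω} {y : F} (hy : IsSquare y)
    (hx : x ^ 2 = algebraMap F Ω y) : x ∈ Set.range (algebraMap F Ω) := by
  obtain ⟨z, rfl⟩ := hy
  rcases sq_eq_sq_iff_eq_or_eq_neg.mp (hx.trans (by rw [map_mul, sq])) with h | h
  · exact ⟨z, h.symm⟩
  · exact ⟨-z, by rw [map_neg, h]⟩

theorem finrank_splittingField_eq_finrank_adjoin_rootSet {p : F[X]}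
    (hp : (p.map (algebraMap F Ω)).Splits) :
    finrank F p.SplittingField = finrank F (adjoin F (p.rootSet Ω)) :=
  have := adjoin_rootSet_isSplittingField hp
  (IsSplittingField.algEquiv _ p).toLinearEquiv.finrank_eq.symm

theorem prod_toFinset_aroots_add [IsAlgClosed Ω] [DecidableEq Ω] {p : F[X]} (hm : p.Monic)
    (hsep : p.Separable) (a : F) :
    ∏ β ∈ (p.aroots Ω).toFinset, (β + algebraMap F Ω a) =
      algebraMap F Ω ((-1) ^ p.natDegree * eval (-a) p) := by
  have hsplit : (p.map (algebraMap F Ω)).Splits := IsAlgClosed.splits _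
  have hcard : Multiset.card (p.aroots Ω) = p.natDegree := by
    rw [aroots, ← hsplit.natDegree_eq_card_roots, natDegree_map]
  have hneg : (fun β => -algebraMap F Ω a - β) = fun β => -1 * (β + algebraMap F Ω a) := by
    ext; ring
  rw [map_mul, map_pow, map_neg, map_one, ← aeval_algebraMap_apply_eq_algebraMap_eval, map_neg,
    hsplit.aeval_eq_prod_aroots_of_monic hm, hneg, Multiset.prod_map_mul, Multiset.map_const',
    Multiset.prod_replicate, hcard, ← mul_assoc, ← mul_pow, neg_one_mul, neg_neg, one_pow,
    one_mul, Finset.prod_eq_multiset_prod, Multiset.toFinset_val,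
    (nodup_roots hsep.map).dedup]

theorem isSquare_of_isSquare_prod {E ι : Type*} [Field E] [DecidableEq ι] {s : Finset ι}
    {f : ι → E} {a : ι} (ha : a ∈ s) (hprod : IsSquare (∏ i ∈ s, f i))
    (hsq : ∀ i ∈ s.erase a, IsSquare (f i)) (h0 : ∀ i ∈ s.erase a, f i ≠ 0) : IsSquare (f a) := by
  have hrest : ∏ i ∈ s.erase a, f i ≠ 0 := Finset.prod_ne_zero_iff.mpr h0
  rw [← mul_div_cancel_right₀ (f a) hrest, Finset.mul_prod_erase s f ha]
  exact hprod.div (Finset.isSquare_prod f hsq)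

end FieldTheory

section Iterate

variable {R : Type*} [CommRing R] {φ : R[X]}

theorem polyIterate_zero (φ : R[X]) : polyIterate φ 0 = X := rfl

theorem polyIterate_succ (φ : R[X]) (m : ℕ) :
    polyIterate φ (m + 1) = (polyIterate φ m).comp φ :=
  Function.iterate_succ_apply' _ _ _

theorem natDegree_polyIterate [IsDomain R] (φ : R[X]) (m : ℕ) :
    (polyIterate φ m).natDegree = φ.natDegree ^ m := by
  induction m with
  | zero => simp [polyIterate_zero]
  | succ m ih => rw [polyIterate_succ, natDegree_comp, ih, pow_succ]

theorem monic_polyIterate (hφ : φ.Monic) (hd : φ.natDegree ≠ 0) (m : ℕ) :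
    (polyIterate φ m).Monic := by
  induction m with
  | zero => exact monic_X
  | succ m ih => rw [polyIterate_succ]; exact ih.comp hφ hd

theorem eval_polyIterate (φ : R[X]) (m : ℕ) (x : R) :
    eval x (polyIterate φ m) = (fun y => eval y φ)^[m] x := by
  induction m generalizing x with
  | zero => simp [polyIterate_zero]
  | succ m ih => rw [polyIterate_succ, eval_comp, ih, Function.iterate_succ_apply]

theorem mem_rootSet_polyIterate_succ {S : Type*} [IsDomain R] [CommRing S] [IsDomain S]
    [Algebra R S] [Module.IsTorsionFree R S] (hφ : φ.Monic) (hd : φ.natDegree ≠ 0) {m : ℕ}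
    {α : S} : α ∈ (polyIterate φ (m + 1)).rootSet S ↔ aeval α φ ∈ (polyIterate φ m).rootSet S := by
  simp only [mem_rootSet, (monic_polyIterate hφ hd _).ne_zero, ne_eq, not_false_eq_true,
    true_and]
  rw [polyIterate_succ, aeval_comp]

end Iterate

section QuadraticIterate

open IntermediateField Module

variable {k Ω : Type*} [Field k] [Field Ω] [Algebra k Ω] {φ : k[X]} {γ c₁ : k}

noncomputable def iterateRootField (φ : k[X]) (Ω : Type*) [Field Ω] [Algebra k Ω] (m : ℕ) :
    IntermediateField k Ω :=
  adjoin k ((polyIterate φ m).rootSet Ω)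

theorem monic_of_eq_quadratic (hφ : φ = (X - C γ) ^ 2 - C c₁) : φ.Monic := by
  rw [hφ]; monicity!

theorem natDegree_of_eq_quadratic (hφ : φ = (X - C γ) ^ 2 - C c₁) : φ.natDegree = 2 := by
  rw [hφ, natDegree_sub_C, natDegree_pow, natDegree_X_sub_C]

theorem iterateRootField_succ (hφ : φ = (X - C γ) ^ 2 - C c₁) {r : Ω → Ω}
    (hr : ∀ β, r β ^ 2 = β + algebraMap k Ω c₁) (m : ℕ) :
    iterateRootField φ Ω (m + 1) =
      (adjoin (iterateRootField φ Ω m) (r '' (polyIterate φ m).rootSet Ω)).restrictScalars k := by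
  have hmonic := monic_of_eq_quadratic hφ
  have hd : φ.natDegree ≠ 0 := by rw [natDegree_of_eq_quadratic hφ]; norm_num
  have haeval : ∀ x : Ω, aeval x φ = (x - algebraMap k Ω γ) ^ 2 - algebraMap k Ω c₁ := by
    simp [hφ]
  rw [iterateRootField, iterateRootField, adjoin_adjoin_left]
  set R := (polyIterate φ m).rootSet Ω
  apply le_antisymm
  · rw [adjoin_le_iff]
    intro α hα
    rw [mem_rootSet_polyIterate_succ hmonic hd] at hα
    -- `α = γ ± √(β + c₁)` where `β = φ(α)` is a root of `φ⁽ᵐ⁾`.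
    have hsq : (α - algebraMap k Ω γ) ^ 2 = r (aeval α φ) ^ 2 := by rw [hr, haeval]; ring
    have hγ : algebraMap k Ω γ ∈ adjoin k (R ∪ r '' R) := IntermediateField.algebraMap_mem _ γ
    have hrβ : r (aeval α φ) ∈ adjoin k (R ∪ r '' R) :=
      subset_adjoin k _ (Or.inr (Set.mem_image_of_mem r hα))
    rcases sq_eq_sq_iff_eq_or_eq_neg.mp hsq with h | h
    · rw [sub_eq_iff_eq_add'.mp h]; exact add_mem hγ hrβ
    · rw [sub_eq_iff_eq_add'.mp h]; exact add_mem hγ (neg_mem hrβ)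
  · rw [adjoin_le_iff]
    have hroot : ∀ β ∈ R,
        algebraMap k Ω γ + r β ∈ adjoin k ((polyIterate φ (m + 1)).rootSet Ω) := by
      intro β hβ
      refine subset_adjoin k _ ((mem_rootSet_polyIterate_succ hmonic hd).mpr ?_)
      rwa [haeval, add_sub_cancel_left, hr, add_sub_cancel_right]
    have hrβ : ∀ β ∈ R,
        r β ∈ adjoin k ((polyIterate φ (m + 1)).rootSet Ω) := fun β hβ => by
      simpa using sub_mem (hroot β hβ) (IntermediateField.algebraMap_mem _ γ)
    rintro β (hβ | ⟨β, hβ, rfl⟩)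
    · have hβeq : β = r β ^ 2 - algebraMap k Ω c₁ := by rw [hr]; ring
      rw [hβeq]
      exact sub_mem (pow_mem (hrβ _ hβ) 2) (IntermediateField.algebraMap_mem _ c₁)
    · exact hrβ β hβ

theorem finrank_iterateRootField_succ (hφ : φ = (X - C γ) ^ 2 - C c₁) {r : Ω → Ω}
    (hr : ∀ β, r β ^ 2 = β + algebraMap k Ω c₁) (m : ℕ) :
    finrank k (iterateRootField φ Ω (m + 1)) = finrank k (iterateRootField φ Ω m) *
      finrank (iterateRootField φ Ω m)
        (adjoin (iterateRootField φ Ω m) (r '' (polyIterate φ m).rootSet Ω)) := by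
  have := finrank_mul_finrank k (iterateRootField φ Ω m)
    (adjoin (iterateRootField φ Ω m) (r '' (polyIterate φ m).rootSet Ω))
  rw [iterateRootField_succ hφ hr m]
  exact this.symm

theorem mem_iterateRootField_succ (hφ : φ = (X - C γ) ^ 2 - C c₁) {r : Ω → Ω}
    (hr : ∀ β, r β ^ 2 = β + algebraMap k Ω c₁) {m : ℕ} {β : Ω}
    (hβ : β ∈ (polyIterate φ m).rootSet Ω) : r β ∈ iterateRootField φ Ω (m + 1) := by
  rw [iterateRootField_succ hφ hr m, mem_restrictScalars]
  exact subset_adjoin _ _ (Set.mem_image_of_mem r hβ)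

theorem iterateRootField_mono [IsAlgClosed Ω] (hφ : φ = (X - C γ) ^ 2 - C c₁) :
    Monotone (iterateRootField φ Ω) := by
  choose r hr using fun β : Ω => IsAlgClosed.exists_pow_nat_eq (β + algebraMap k Ω c₁) two_pos
  refine monotone_nat_of_le_succ fun m => ?_
  rw [iterateRootField_succ hφ hr m, restrictScalars_adjoin_eq_sup]
  exact le_sup_left

theorem sq_mem_range_algebraMap_iterateRootField {m : ℕ} {x β : Ω}
    (hx : x ^ 2 = β + algebraMap k Ω c₁) (hβ : β ∈ (polyIterate φ m).rootSet Ω) :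
    x ^ 2 ∈ Set.range (algebraMap (iterateRootField φ Ω m) Ω) :=
  ⟨⟨β + algebraMap k Ω c₁, add_mem (subset_adjoin k _ hβ) (IntermediateField.algebraMap_mem _ c₁)⟩,
    hx.symm⟩

theorem card_toFinset_aroots_polyIterate_le [DecidableEq Ω] (hφ : φ.natDegree = 2) (m : ℕ) :
    ((polyIterate φ m).aroots Ω).toFinset.card ≤ 2 ^ m :=
  calc _ ≤ Multiset.card ((polyIterate φ m).aroots Ω) := Multiset.toFinset_card_le _
    _ ≤ ((polyIterate φ m).map (algebraMap k Ω)).natDegree := card_roots' _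
    _ = 2 ^ m := by rw [natDegree_map, natDegree_polyIterate, hφ]

theorem finrank_iterateRootField_le [IsAlgClosed Ω] (hφ : φ = (X - C γ) ^ 2 - C c₁) (m : ℕ) :
    finrank k (iterateRootField φ Ω m) ≤ 2 ^ (2 ^ m - 1) := by
  classical
  choose r hr using fun β : Ω => IsAlgClosed.exists_pow_nat_eq (β + algebraMap k Ω c₁) two_pos
  induction m with
  | zero =>
    rw [iterateRootField, polyIterate_zero, rootSet_def, aroots_X, Multiset.toFinset_singleton,
      Finset.coe_singleton, adjoin_zero, IntermediateField.finrank_bot]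
    rfl
  | succ m ih =>
    rw [finrank_iterateRootField_succ hφ hr, rootSet_def]
    have hsq (β) (hβ : β ∈ ((polyIterate φ m).aroots Ω).toFinset) :=
      sq_mem_range_algebraMap_iterateRootField (hr β) (by rw [rootSet_def]; exact hβ)
    calc _ ≤ 2 ^ (2 ^ m - 1) * 2 ^ (2 ^ m) :=
          Nat.mul_le_mul ih ((finrank_adjoin_image_le_two_pow_card _ hsq).trans
            (Nat.pow_le_pow_right two_pos
              (card_toFinset_aroots_polyIterate_le (natDegree_of_eq_quadratic hφ) m)))
      _ = 2 ^ (2 ^ (m + 1) - 1) := by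
          rw [← pow_add, pow_succ]
          have := Nat.one_le_two_pow (n := m)
          congr 1
          omega

theorem isSquare_algebraMap_iterateRootField [IsAlgClosed Ω] [DecidableEq Ω]
    (hφ : φ = (X - C γ) ^ 2 - C c₁) {j m : ℕ} (hjm : j < m) {d : k}
    (hd : algebraMap k Ω d =
      ∏ β ∈ ((polyIterate φ j).aroots Ω).toFinset, (β + algebraMap k Ω c₁)) :
    IsSquare (algebraMap k (iterateRootField φ Ω m) d) := by
  choose r hr using fun β : Ω => IsAlgClosed.exists_pow_nat_eq (β + algebraMap k Ω c₁) two_pos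
  have hmem : ∏ β ∈ ((polyIterate φ j).aroots Ω).toFinset, r β ∈ iterateRootField φ Ω m :=
    iterateRootField_mono hφ hjm <| prod_mem fun β hβ =>
      mem_iterateRootField_succ hφ hr (by rw [rootSet_def]; exact hβ)
  refine ⟨⟨_, hmem⟩, Subtype.ext ?_⟩
  change algebraMap k Ω d = _ * _
  rw [hd, ← sq, ← Finset.prod_pow]
  exact Finset.prod_congr rfl fun β _ => (hr β).symm

theorem finrank_iterateRootField_succ_lt [IsAlgClosed Ω] [DecidableEq Ω]
    (hφ : φ = (X - C γ) ^ 2 - C c₁) {m : ℕ} {d : k}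
    (hd : algebraMap k Ω d =
      ∏ β ∈ ((polyIterate φ m).aroots Ω).toFinset, (β + algebraMap k Ω c₁))
    (hd0 : d ≠ 0) (hsq : IsSquare (algebraMap k (iterateRootField φ Ω m) d)) :
    finrank k (iterateRootField φ Ω (m + 1)) < 2 ^ (2 ^ (m + 1) - 1) := by
  choose r hr using fun β : Ω => IsAlgClosed.exists_pow_nat_eq (β + algebraMap k Ω c₁) two_pos
  set T := ((polyIterate φ m).aroots Ω).toFinset
  have hsq_mem (β) (hβ : β ∈ T) :=
    sq_mem_range_algebraMap_iterateRootField (hr β) (by rw [rootSet_def]; exact hβ)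
  have hr0 (β) (hβ : β ∈ T) : r β ≠ 0 := by
    have hprod0 : ∏ β ∈ T, (β + algebraMap k Ω c₁) ≠ 0 := by
      rw [← hd]; exact (_root_.map_ne_zero _).mpr hd0
    have := Finset.prod_ne_zero_iff.mp hprod0 β hβ
    rw [← hr] at this
    exact ne_zero_pow two_ne_zero this
  -- `∏ r β` is a square root of `d`, which already has one in `K_m`.
  have hprod : ∏ β ∈ T, r β ∈ Set.range (algebraMap (iterateRootField φ Ω m) Ω) :=
    mem_range_of_sq_eq_algebraMap hsq <| by
      rw [← IsScalarTower.algebraMap_apply, hd, ← Finset.prod_pow]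
      exact Finset.prod_congr rfl fun β _ => hr β
  rw [finrank_iterateRootField_succ hφ hr, rootSet_def]
  calc _ ≤ 2 ^ (2 ^ m - 1) * 2 ^ (2 ^ m - 1) :=
        Nat.mul_le_mul (finrank_iterateRootField_le hφ m)
          ((finrank_adjoin_image_le_two_pow_card_sub_one T hsq_mem hr0 hprod).trans
            (Nat.pow_le_pow_right two_pos (Nat.sub_le_sub_right
              (card_toFinset_aroots_polyIterate_le (natDegree_of_eq_quadratic hφ) m) 1)))
    _ < 2 ^ (2 ^ (m + 1) - 1) := by
        rw [← pow_add]
        refine Nat.pow_lt_pow_right one_lt_two ?_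
        have := Nat.one_le_two_pow (n := m)
        rw [pow_succ]
        omega

theorem isSquare_algebraMap_iterateRootField_of_isSquare_prod [IsAlgClosed Ω] [DecidableEq Ω]
    (hφ : φ = (X - C γ) ^ 2 - C c₁) {c : ℕ → k}
    (hc : ∀ j, algebraMap k Ω (c (j + 1)) =
      ∏ β ∈ ((polyIterate φ j).aroots Ω).toFinset, (β + algebraMap k Ω c₁))
    {I : Finset ℕ} {M : ℕ} (hI : ∀ i ∈ I, 1 ≤ i ∧ i ≤ M + 1) (hMI : M + 1 ∈ I)
    (hnz : ∀ i ∈ I, c i ≠ 0) (hsquare : IsSquare (∏ i ∈ I, c i)) :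
    IsSquare (algebraMap k (iterateRootField φ Ω M) (c (M + 1))) := by
  refine isSquare_of_isSquare_prod (f := fun i => algebraMap k (iterateRootField φ Ω M) (c i))
    hMI (by rw [← map_prod]; exact hsquare.map _) (fun i hi => ?_)
    (fun i hi => (_root_.map_ne_zero _).mpr (hnz i (Finset.mem_of_mem_erase hi)))
  obtain ⟨hi1, hiM⟩ := hI i (Finset.mem_of_mem_erase hi)
  have hne := Finset.ne_of_mem_erase hi
  obtain ⟨j, rfl⟩ : ∃ j, i = j + 1 := ⟨i - 1, by omega⟩
  exact isSquare_algebraMap_iterateRootField hφ (by omega) (hc j)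

theorem algebraMap_eq_prod_toFinset_aroots [IsAlgClosed Ω] [DecidableEq Ω]
    (hφ : φ = (X - C γ) ^ 2 - C c₁) (hsep : ∀ m, 1 ≤ m → (polyIterate φ m).Separable)
    {c : ℕ → k} (hc1 : c 1 = c₁) (hcn : ∀ m, 2 ≤ m → c m = (fun x => (x - γ) ^ 2 - c₁)^[m] γ)
    (m : ℕ) :
    algebraMap k Ω (c (m + 1)) =
      ∏ β ∈ ((polyIterate φ m).aroots Ω).toFinset, (β + algebraMap k Ω c₁) := by
  cases m with
  | zero => simp [polyIterate_zero, hc1]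
  | succ m =>
    have heval : (fun y => eval y φ) = fun x => (x - γ) ^ 2 - c₁ := by funext; simp [hφ]
    rw [prod_toFinset_aroots_add (monic_polyIterate (monic_of_eq_quadratic hφ)
        (by rw [natDegree_of_eq_quadratic hφ]; norm_num) _) (hsep _ (by omega)),
      natDegree_polyIterate, natDegree_of_eq_quadratic hφ,
      Even.neg_one_pow (by simp [pow_succ]), one_mul, eval_polyIterate, heval,
      hcn _ (by omega), Function.iterate_succ_apply]
    simp

end QuadraticIterate

theorem stmt_19_general {k : Type*} [Field k]
    (γ c₁ : k)
    (φ : Polynomial k) (hφ : φ = (X - C γ) ^ 2 - C c₁)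
    (hsep : ∀ m, 1 ≤ m → (polyIterate φ m).Separable)
    (c : ℕ → k)
    (hc1 : c 1 = c₁)
    (hcn : ∀ m, 2 ≤ m → c m = (fun x => (x - γ) ^ 2 - c₁)^[m] γ)
    (hnz : ∀ m, 1 ≤ m → c m ≠ 0)
    (n : ℕ)
    (I : Finset ℕ) (hI : I ⊆ Finset.Icc 1 n) (hIne : I.Nonempty)
    (hsquare : ∃ s : k, s ^ 2 = ∏ i ∈ I, c i) :
    ∃ N, 1 ≤ N ∧
      Nat.card ((polyIterate φ N).SplittingField ≃ₐ[k] (polyIterate φ N).SplittingField) <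
        2 ^ (2 ^ N - 1) := by
  classical
  let Ω := AlgebraicClosure k
  have hc := algebraMap_eq_prod_toFinset_aroots (Ω := Ω) hφ hsep hc1 hcn
  obtain ⟨M, hM⟩ : ∃ M, I.max' hIne = M + 1 :=
    ⟨I.max' hIne - 1, by have := (Finset.mem_Icc.mp (hI (I.max'_mem hIne))).1; omega⟩
  have hbounds (i) (hi : i ∈ I) : 1 ≤ i ∧ i ≤ M + 1 :=
    ⟨(Finset.mem_Icc.mp (hI hi)).1, hM ▸ I.le_max' i hi⟩
  obtain ⟨s, hs⟩ := hsquare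
  have hsq := isSquare_algebraMap_iterateRootField_of_isSquare_prod hφ hc hbounds
    (hM ▸ I.max'_mem hIne) (fun i hi => hnz i (hbounds i hi).1) ⟨s, by rw [← hs, sq]⟩
  refine ⟨M + 1, by omega, ?_⟩
  have : IsGalois k (polyIterate φ (M + 1)).SplittingField :=
    IsGalois.of_separable_splitting_field (hsep (M + 1) (by omega))
  rw [IsGalois.card_aut_eq_finrank, finrank_splittingField_eq_finrank_adjoin_rootSet
    (IsAlgClosed.splits ((polyIterate φ (M + 1)).map (algebraMap k Ω)))]
  exact finrank_iterateRootField_succ_lt hφ (hc M) (hnz _ (by omega)) hsq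

/-- one direction of Stoll's criterion: Let `k` have characteristic ≠ 2 and
`φ = (x - γ)² - c₁ ∈ k[x]` be monic quadratic with all iterates separable and adjusted
post-critical orbit `(cₙ) ⊂ k×`.  If for some `n ≥ 1` the classes of `c₁, …, cₙ` in
`k×/(k×)²` are linearly dependent over `𝔽₂` (some nonempty subproduct is a square in `k`),
then the arboreal representation `ρ_φ` is not surjective: for some level `N` the Galois
group of the splitting field `K_N` of `φ⁽ᴺ⁾` over `k` is smaller than
`Aut(T_N) = 2^(2^N - 1)`. -/
theorem stmt_19 {k : Type*} [Field k] (hchar : (2 : k) ≠ 0)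
    (γ c₁ : k)
    (φ : Polynomial k) (hφ : φ = (X - C γ) ^ 2 - C c₁)
    (hsep : ∀ m, 1 ≤ m → (polyIterate φ m).Separable)
    (c : ℕ → k)
    (hc1 : c 1 = c₁)
    (hcn : ∀ m, 2 ≤ m → c m = (fun x => (x - γ) ^ 2 - c₁)^[m] γ)
    (hnz : ∀ m, 1 ≤ m → c m ≠ 0)
    (n : ℕ) (hn : 1 ≤ n)
    (I : Finset ℕ) (hI : I ⊆ Finset.Icc 1 n) (hIne : I.Nonempty)
    (hsquare : ∃ s : k, s ^ 2 = ∏ i ∈ I, c i) :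
    ∃ N, 1 ≤ N ∧
      Nat.card ((polyIterate φ N).SplittingField ≃ₐ[k] (polyIterate φ N).SplittingField) <
        2 ^ (2 ^ N - 1) :=
  stmt_19_general γ c₁ φ hφ hsep c hc1 hcn hnz n I hI hIne hsquare
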